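/- Assume α ∈ (0,1), f : [0,T] → ℝ is absolutely continuous, and t ↦ t^{1-α} f'(t) is essentially bounded on (0,T). Then there is a constant C₀ depending only on α such that for all 0 ≤ t₁ ≤ t₂ ≤ T, |t₂^{1-α} (I^α f')(t₂) − t₁^{1-α} (I^α f')(t₁)| ≤ C₀ ‖t^{1-α} f'‖_{L^∞(0,T)} |t₂ − t₁|^α. In particular, t ↦ t^{1-α} (I^α f')(t) is α-Hölder continuous on [0,T]. -/

import Mathlib

/-!
With `h τ = τ^{1-α} f'(τ)`, so that `|h| ≤ M`, and the kernel
`k_t(τ) = t^{1-α} (t-τ)^{α-1} τ^{α-1}`, one has `t^{1-α} (I^α f')(t) = Γ(α)⁻¹ ∫₀ᵗ k_t h`.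
For fixed `τ`, `k_t(τ) = (1 - τ/t)^{α-1} τ^{α-1}` decreases in `t`, while `∫₀ᵗ k_t = t^α ∫₀¹ k_1`
increases. Hence, for `t₁ ≤ t₂`, `∫₀^{t₁} |k_{t₂} - k_{t₁}| ≤ ∫_{t₁}^{t₂} k_{t₂}`, and so
`|t₂^{1-α} (I^α f')(t₂) - t₁^{1-α} (I^α f')(t₁)| ≤ 2 M Γ(α)⁻¹ ∫_{t₁}^{t₂} k_{t₂}`. On `(0, t)` the smaller
of `τ^{α-1}` and `(t-τ)^{α-1}` is at most `(t/2)^{α-1}`, so `k_t(τ) ≤ 2 (τ^{α-1} + (t-τ)^{α-1})`,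
and integrating gives `∫_{t₁}^{t₂} k_{t₂} ≤ 4 (t₂ - t₁)^α / α`.
-/

open MeasureTheory Set intervalIntegral

/-- Riemann–Liouville fractional integral of order `α` with base point `0`. -/
noncomputable def riemannLiouville (α : ℝ) (f : ℝ → ℝ) (t : ℝ) : ℝ :=
  (1 / Real.Gamma α) * ∫ τ in (0:ℝ)..t, (t - τ) ^ (α - 1) * f τ

theorem rpow_mul_rpow_le_of_nonpos {a b p : ℝ} (ha : 0 < a) (hb : 0 < b) (hp : p ≤ 0) :
    a ^ p * b ^ p ≤ ((a + b) / 2) ^ p * (a ^ p + b ^ p) := by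
  have key : ∀ {x y : ℝ}, 0 < x → x ≤ y →
      x ^ p * y ^ p ≤ ((x + y) / 2) ^ p * (x ^ p + y ^ p) := by
    intro x y hx hxy
    have hy : y ^ p ≤ ((x + y) / 2) ^ p :=
      Real.rpow_le_rpow_of_nonpos (by linarith) (by linarith) hp
    have := Real.rpow_nonneg hx.le p
    have := Real.rpow_nonneg (hx.trans_le hxy).le p
    nlinarith
  rcases le_total a b with h | h
  · exact key ha h
  · simpa only [mul_comm, add_comm] using key hb h

theorem intervalIntegrable_sub_rpow {r : ℝ} (hr : -1 < r) (t a b : ℝ) :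
    IntervalIntegrable (fun τ => (t - τ) ^ r) volume a b := by
  simpa using (intervalIntegrable_rpow' (a := t - a) (b := t - b) hr).comp_sub_left t

theorem integral_rpow_add_sub_rpow {α : ℝ} (hα0 : 0 < α) (t a b : ℝ) :
    ∫ τ in a..b, (τ ^ (α - 1) + (t - τ) ^ (α - 1)) =
      (b ^ α - a ^ α) / α + ((t - a) ^ α - (t - b) ^ α) / α := by
  have hr : -1 < α - 1 := by linarith
  rw [integral_add (intervalIntegrable_rpow' hr) (intervalIntegrable_sub_rpow hr t a b),
    integral_comp_sub_left (fun x => x ^ (α - 1)), integral_rpow (Or.inl hr),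
    integral_rpow (Or.inl hr), sub_add_cancel]

theorem ae_restrict_Ioc_mem_Ioo (a b : ℝ) : ∀ᵐ τ ∂volume.restrict (Ioc a b), τ ∈ Ioo a b := by
  rw [← Measure.restrict_congr_set Ioo_ae_eq_Ioc]
  exact ae_restrict_mem measurableSet_Ioo

theorem IntervalIntegrable.mul_of_ae_abs_le {w h : ℝ → ℝ} {a b M : ℝ} (hab : a ≤ b)
    (hw : IntervalIntegrable w volume a b) (hh : AEStronglyMeasurable h (volume.restrict (Ioc a b)))
    (hM : ∀ᵐ τ ∂volume.restrict (Ioc a b), |h τ| ≤ M) :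
    IntervalIntegrable (fun τ => w τ * h τ) volume a b := by
  rw [intervalIntegrable_iff_integrableOn_Ioc_of_le hab] at hw ⊢
  exact hw.mul_bdd hh hM

theorem abs_integral_mul_le_of_ae_abs_le {w W h : ℝ → ℝ} {a b M : ℝ} (hab : a ≤ b)
    (hW : IntervalIntegrable W volume a b) (hwW : ∀ τ ∈ Ioo a b, |w τ| ≤ W τ)
    (hM : ∀ᵐ τ ∂volume.restrict (Ioc a b), |h τ| ≤ M) :
    |∫ τ in a..b, w τ * h τ| ≤ M * ∫ τ in a..b, W τ := by
  rw [← Real.norm_eq_abs, ← intervalIntegral.integral_const_mul]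
  refine norm_integral_le_of_norm_le hab ?_ (hW.const_mul M)
  rw [← ae_restrict_iff' measurableSet_Ioc]
  filter_upwards [hM, ae_restrict_Ioc_mem_Ioo a b] with τ hτM hτ
  rw [Real.norm_eq_abs, abs_mul, mul_comm M]
  exact mul_le_mul (hwW τ hτ) hτM (abs_nonneg _) ((abs_nonneg _).trans (hwW τ hτ))

noncomputable def scaledRLKernel (α t τ : ℝ) : ℝ := t ^ (1 - α) * (t - τ) ^ (α - 1) * τ ^ (α - 1)

section

variable {α t τ : ℝ}

theorem scaledRLKernel_nonneg (hτ : 0 ≤ τ) (hτt : τ ≤ t) : 0 ≤ scaledRLKernel α t τ :=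
  mul_nonneg (mul_nonneg (Real.rpow_nonneg (hτ.trans hτt) _)
    (Real.rpow_nonneg (sub_nonneg.2 hτt) _)) (Real.rpow_nonneg hτ _)

theorem scaledRLKernel_le (hα0 : 0 ≤ α) (hα1 : α ≤ 1) (hτ : 0 < τ) (hτt : τ < t) :
    scaledRLKernel α t τ ≤ 2 * (τ ^ (α - 1) + (t - τ) ^ (α - 1)) := by
  have ht : 0 < t := hτ.trans hτt
  have hprod := rpow_mul_rpow_le_of_nonpos hτ (sub_pos.2 hτt) (by linarith : α - 1 ≤ 0)
  rw [add_sub_cancel, Real.div_rpow ht.le zero_le_two] at hprod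
  have hcancel : t ^ (1 - α) * (t ^ (α - 1) / 2 ^ (α - 1)) = 2 ^ (1 - α) := by
    rw [mul_div_assoc', ← Real.rpow_add ht, sub_add_sub_cancel', sub_self, Real.rpow_zero,
      one_div, ← Real.rpow_neg zero_le_two, neg_sub]
  have htwo : (2 : ℝ) ^ (1 - α) ≤ 2 :=
    Real.rpow_le_self_of_one_le one_le_two (by linarith)
  calc scaledRLKernel α t τ = t ^ (1 - α) * (τ ^ (α - 1) * (t - τ) ^ (α - 1)) := by
        unfold scaledRLKernel; ring
    _ ≤ t ^ (1 - α) * (t ^ (α - 1) / 2 ^ (α - 1) * (τ ^ (α - 1) + (t - τ) ^ (α - 1))) := by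
        gcongr
    _ = 2 ^ (1 - α) * (τ ^ (α - 1) + (t - τ) ^ (α - 1)) := by rw [← mul_assoc, hcancel]
    _ ≤ 2 * (τ ^ (α - 1) + (t - τ) ^ (α - 1)) := by gcongr

theorem scaledRLKernel_antitone {t₁ t₂ : ℝ} (hα1 : α ≤ 1) (hτ : 0 ≤ τ) (hτt : τ < t₁)
    (ht : t₁ ≤ t₂) : scaledRLKernel α t₂ τ ≤ scaledRLKernel α t₁ τ := by
  have hform : ∀ t, τ < t → t ^ (1 - α) * (t - τ) ^ (α - 1) = ((t - τ) / t) ^ (α - 1) := by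
    intro t hτt
    have ht : 0 < t := hτ.trans_lt hτt
    rw [Real.div_rpow (by linarith) ht.le, div_eq_inv_mul, ← Real.rpow_neg ht.le, neg_sub]
  unfold scaledRLKernel
  rw [hform t₁ hτt, hform t₂ (hτt.trans_le ht)]
  gcongr ?_ * _
  refine Real.rpow_le_rpow_of_nonpos (div_pos (sub_pos.2 hτt) (hτ.trans_lt hτt)) ?_
    (by linarith)
  rw [sub_div, sub_div, div_self (hτ.trans_lt hτt).ne', div_self (by linarith)]
  gcongr 1 - ?_
  exact div_le_div_of_nonneg_left hτ (hτ.trans_lt hτt) ht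

theorem intervalIntegrable_scaledRLKernel {a b : ℝ} (hα0 : 0 < α) (hα1 : α ≤ 1) (ha : 0 ≤ a)
    (hab : a ≤ b) (hbt : b ≤ t) : IntervalIntegrable (scaledRLKernel α t) volume a b := by
  have hr : -1 < α - 1 := by linarith
  refine (((intervalIntegrable_rpow' hr).add (intervalIntegrable_sub_rpow hr t a b)).const_mul
    2).mono_fun' (by unfold scaledRLKernel; fun_prop) ?_
  rw [uIoc_of_le hab]
  filter_upwards [ae_restrict_Ioc_mem_Ioo a b] with τ hτ
  rw [Real.norm_of_nonneg (scaledRLKernel_nonneg (ha.trans hτ.1.le) (hτ.2.le.trans hbt))]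
  exact scaledRLKernel_le hα0.le hα1 (ha.trans_lt hτ.1) (hτ.2.trans_le hbt)

theorem integral_scaledRLKernel (ht : 0 < t) :
    ∫ τ in 0..t, scaledRLKernel α t τ = t ^ α * ∫ s in 0..1, scaledRLKernel α 1 s := by
  have hpoint : ∀ s ∈ uIcc (0 : ℝ) 1,
      scaledRLKernel α t (t * s) = t ^ (α - 1) * scaledRLKernel α 1 s := by
    intro s hs
    rw [uIcc_of_le zero_le_one] at hs
    unfold scaledRLKernel
    rw [show t - t * s = t * (1 - s) by ring, Real.mul_rpow ht.le (by linarith [hs.2]),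
      Real.mul_rpow ht.le hs.1, Real.one_rpow]
    have hcancel : t ^ (1 - α) * t ^ (α - 1) = 1 := by
      rw [← Real.rpow_add ht, sub_add_sub_cancel', sub_self, Real.rpow_zero]
    linear_combination (t ^ (α - 1) * (1 - s) ^ (α - 1) * s ^ (α - 1)) * hcancel
  calc ∫ τ in 0..t, scaledRLKernel α t τ = t * ∫ s in 0..1, scaledRLKernel α t (t * s) := by
        simp [ht.ne']
    _ = t * ∫ s in 0..1, t ^ (α - 1) * scaledRLKernel α 1 s := by rw [integral_congr hpoint]
    _ = t ^ α * ∫ s in 0..1, scaledRLKernel α 1 s := by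
        rw [intervalIntegral.integral_const_mul, ← mul_assoc, Real.rpow_sub_one ht.ne',
          mul_div_cancel₀ _ ht.ne']

theorem integral_scaledRLKernel_mono {t₁ t₂ : ℝ} (hα0 : 0 < α) (ht₁ : 0 ≤ t₁) (ht : t₁ ≤ t₂) :
    ∫ τ in 0..t₁, scaledRLKernel α t₁ τ ≤ ∫ τ in 0..t₂, scaledRLKernel α t₂ τ := by
  have hnonneg : ∀ {t : ℝ}, 0 ≤ t → 0 ≤ ∫ τ in 0..t, scaledRLKernel α t τ := fun ht =>
    integral_nonneg ht fun τ hτ => scaledRLKernel_nonneg hτ.1 hτ.2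
  rcases ht₁.eq_or_lt with rfl | ht₁
  · rw [integral_same]
    exact hnonneg ht
  rw [integral_scaledRLKernel ht₁, integral_scaledRLKernel (ht₁.trans_le ht)]
  gcongr
  exact hnonneg zero_le_one

theorem integral_scaledRLKernel_le {t₁ : ℝ} (hα0 : 0 < α) (hα1 : α ≤ 1) (ht₁ : 0 ≤ t₁)
    (ht : t₁ ≤ t) : ∫ τ in t₁..t, scaledRLKernel α t τ ≤ 4 / α * (t - t₁) ^ α := by
  have hr : -1 < α - 1 := by linarith
  have hsub : t ^ α - t₁ ^ α ≤ (t - t₁) ^ α := by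
    have := Real.rpow_add_le_add_rpow ht₁ (sub_nonneg.2 ht) hα0.le hα1
    rw [add_sub_cancel] at this
    linarith
  calc ∫ τ in t₁..t, scaledRLKernel α t τ
      ≤ ∫ τ in t₁..t, 2 * (τ ^ (α - 1) + (t - τ) ^ (α - 1)) :=
        integral_mono_on_of_le_Ioo ht (intervalIntegrable_scaledRLKernel hα0 hα1 ht₁ ht le_rfl)
          (((intervalIntegrable_rpow' hr).add (intervalIntegrable_sub_rpow hr t _ _)).const_mul 2)
          fun τ hτ => scaledRLKernel_le hα0.le hα1 (ht₁.trans_lt hτ.1) hτ.2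
    _ = 2 * ((t ^ α - t₁ ^ α) / α + (t - t₁) ^ α / α) := by
        rw [intervalIntegral.integral_const_mul, integral_rpow_add_sub_rpow hα0 t, sub_self,
          Real.zero_rpow hα0.ne', sub_zero]
    _ ≤ 2 * ((t - t₁) ^ α / α + (t - t₁) ^ α / α) := by gcongr
    _ = 4 / α * (t - t₁) ^ α := by ring

theorem integral_scaledRLKernel_sub_le {t₁ t₂ : ℝ} (hα0 : 0 < α) (hα1 : α ≤ 1) (ht₁ : 0 ≤ t₁)
    (ht : t₁ ≤ t₂) :
    ∫ τ in 0..t₁, (scaledRLKernel α t₁ τ - scaledRLKernel α t₂ τ) ≤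
      ∫ τ in t₁..t₂, scaledRLKernel α t₂ τ := by
  have hmono := integral_scaledRLKernel_mono hα0 ht₁ ht
  have hk₂ := intervalIntegrable_scaledRLKernel hα0 hα1 le_rfl ht₁ ht
  rw [← integral_add_adjacent_intervals hk₂
    (intervalIntegrable_scaledRLKernel hα0 hα1 ht₁ ht le_rfl)] at hmono
  rw [integral_sub (intervalIntegrable_scaledRLKernel hα0 hα1 le_rfl ht₁ le_rfl) hk₂]
  linarith

end

theorem abs_integral_scaledRLKernel_mul_sub_le {α M t₁ t₂ : ℝ} {h : ℝ → ℝ} (hα0 : 0 < α)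
    (hα1 : α ≤ 1) (hM0 : 0 ≤ M) (ht₁ : 0 ≤ t₁) (ht : t₁ ≤ t₂)
    (hh : AEStronglyMeasurable h (volume.restrict (Ioc 0 t₂)))
    (hM : ∀ᵐ τ ∂volume.restrict (Ioc 0 t₂), |h τ| ≤ M) :
    |(∫ τ in 0..t₂, scaledRLKernel α t₂ τ * h τ) - ∫ τ in 0..t₁, scaledRLKernel α t₁ τ * h τ| ≤
      8 / α * M * (t₂ - t₁) ^ α := by
  set k₁ := scaledRLKernel α t₁
  set k₂ := scaledRLKernel α t₂
  have hk₁ : IntervalIntegrable k₁ volume 0 t₁ :=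
    intervalIntegrable_scaledRLKernel hα0 hα1 le_rfl ht₁ le_rfl
  have hk₂ : IntervalIntegrable k₂ volume 0 t₁ :=
    intervalIntegrable_scaledRLKernel hα0 hα1 le_rfl ht₁ ht
  have hk₂' : IntervalIntegrable k₂ volume t₁ t₂ :=
    intervalIntegrable_scaledRLKernel hα0 hα1 ht₁ ht le_rfl
  have hsub₁ : Ioc 0 t₁ ⊆ Ioc 0 t₂ := Ioc_subset_Ioc_right ht
  have hsub₂ : Ioc t₁ t₂ ⊆ Ioc 0 t₂ := Ioc_subset_Ioc_left ht₁
  have hM₁ := ae_restrict_of_ae_restrict_of_subset hsub₁ hM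
  have hM₂ := ae_restrict_of_ae_restrict_of_subset hsub₂ hM
  have hk₁h := hk₁.mul_of_ae_abs_le ht₁ (hh.mono_set hsub₁) hM₁
  have hk₂h := hk₂.mul_of_ae_abs_le ht₁ (hh.mono_set hsub₁) hM₁
  have hk₂h' := hk₂'.mul_of_ae_abs_le ht (hh.mono_set hsub₂) hM₂
  have hsplit : (∫ τ in 0..t₂, k₂ τ * h τ) - ∫ τ in 0..t₁, k₁ τ * h τ =
      (∫ τ in t₁..t₂, k₂ τ * h τ) + ∫ τ in 0..t₁, (k₂ τ - k₁ τ) * h τ := by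
    simp only [sub_mul]
    rw [← integral_add_adjacent_intervals hk₂h hk₂h', integral_sub hk₂h hk₁h]
    ring
  have hnear : |∫ τ in t₁..t₂, k₂ τ * h τ| ≤ M * ∫ τ in t₁..t₂, k₂ τ :=
    abs_integral_mul_le_of_ae_abs_le ht hk₂' (fun τ hτ =>
      (abs_of_nonneg (scaledRLKernel_nonneg (ht₁.trans hτ.1.le) hτ.2.le)).le) hM₂
  have hfar : |∫ τ in 0..t₁, (k₂ τ - k₁ τ) * h τ| ≤ M * ∫ τ in 0..t₁, (k₁ τ - k₂ τ) :=
    abs_integral_mul_le_of_ae_abs_le ht₁ (hk₁.sub hk₂) (fun τ hτ => by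
      rw [abs_sub_comm, abs_of_nonneg (sub_nonneg.2 (scaledRLKernel_antitone hα1 hτ.1.le hτ.2 ht))])
      hM₁
  have hcompare := integral_scaledRLKernel_sub_le hα0 hα1 ht₁ ht
  have htail := integral_scaledRLKernel_le hα0 hα1 ht₁ ht
  calc |(∫ τ in 0..t₂, k₂ τ * h τ) - ∫ τ in 0..t₁, k₁ τ * h τ|
      ≤ |∫ τ in t₁..t₂, k₂ τ * h τ| + |∫ τ in 0..t₁, (k₂ τ - k₁ τ) * h τ| := by
        rw [hsplit]; exact abs_add_le _ _
    _ ≤ (M * ∫ τ in t₁..t₂, k₂ τ) + M * ∫ τ in t₁..t₂, k₂ τ := by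
        gcongr
        exact hfar.trans (by gcongr)
    _ ≤ M * (4 / α * (t₂ - t₁) ^ α) + M * (4 / α * (t₂ - t₁) ^ α) := by gcongr
    _ = 8 / α * M * (t₂ - t₁) ^ α := by ring

theorem rpow_mul_riemannLiouville (α : ℝ) (g : ℝ → ℝ) {t : ℝ} (ht : 0 ≤ t) :
    t ^ (1 - α) * riemannLiouville α g t =
      (Real.Gamma α)⁻¹ * ∫ τ in 0..t, scaledRLKernel α t τ * (τ ^ (1 - α) * g τ) := by
  rw [riemannLiouville, one_div, mul_left_comm, ← intervalIntegral.integral_const_mul]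
  congr 1
  refine integral_congr_ae (Filter.Eventually.of_forall fun τ hτ => ?_)
  rw [uIoc_of_le ht] at hτ
  have hcancel : τ ^ (α - 1) * τ ^ (1 - α) = 1 := by
    rw [← Real.rpow_add hτ.1, sub_add_sub_cancel', sub_self, Real.rpow_zero]
  unfold scaledRLKernel
  linear_combination (t ^ (1 - α) * (t - τ) ^ (α - 1) * g τ) * hcancel.symm

theorem rl_holder_estimate (α : ℝ) (hα : α ∈ Ioo (0:ℝ) 1) :
    ∃ C₀ : ℝ, 0 < C₀ ∧
      ∀ (T : ℝ) (_hT : 0 < T) (f f' : ℝ → ℝ),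
        IntegrableOn f' (Icc 0 T) →
        (∀ t ∈ Icc (0:ℝ) T, f t = f 0 + ∫ s in (0:ℝ)..t, f' s) →
        ∀ M : ℝ, (∀ᵐ t ∂(volume.restrict (Ioo (0:ℝ) T)), |t ^ (1 - α) * f' t| ≤ M) →
        ∀ t₁ ∈ Icc (0:ℝ) T, ∀ t₂ ∈ Icc (0:ℝ) T, t₁ ≤ t₂ →
          |t₂ ^ (1 - α) * riemannLiouville α f' t₂
            - t₁ ^ (1 - α) * riemannLiouville α f' t₁| ≤ C₀ * M * |t₂ - t₁| ^ α := by
  obtain ⟨hα0, hα1⟩ := hα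
  have hΓ : 0 < Real.Gamma α := Real.Gamma_pos_of_pos hα0
  refine ⟨8 / Real.Gamma (α + 1), div_pos (by norm_num) (Real.Gamma_pos_of_pos (by linarith)), ?_⟩
  rintro T hT f f' hf' - M hM t₁ ⟨ht₁, -⟩ t₂ ⟨-, ht₂T⟩ ht
  have hM0 : 0 ≤ M := by
    have : (ae (volume.restrict (Ioo (0:ℝ) T))).NeBot := ae_neBot.2 (by simp [hT])
    obtain ⟨τ, hτ⟩ := hM.exists
    exact (abs_nonneg _).trans hτ
  have hsub : Ioc 0 t₂ ⊆ Icc 0 T := Ioc_subset_Icc_self.trans (Icc_subset_Icc_right ht₂T)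
  have hmeas : AEStronglyMeasurable (fun τ => τ ^ (1 - α) * f' τ) (volume.restrict (Ioc 0 t₂)) :=
    (measurable_id.pow_const _).aestronglyMeasurable.mul (hf'.aestronglyMeasurable.mono_set hsub)
  have hbound : ∀ᵐ τ ∂volume.restrict (Ioc 0 t₂), |τ ^ (1 - α) * f' τ| ≤ M := by
    rw [← Measure.restrict_congr_set Ioo_ae_eq_Ioc]
    exact ae_restrict_of_ae_restrict_of_subset (Ioo_subset_Ioo_right ht₂T) hM
  rw [rpow_mul_riemannLiouville α f' (ht₁.trans ht), rpow_mul_riemannLiouville α f' ht₁, ← mul_sub,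
    abs_mul, abs_of_pos (inv_pos.2 hΓ), abs_of_nonneg (sub_nonneg.2 ht), Real.Gamma_add_one hα0.ne']
  calc (Real.Gamma α)⁻¹ * |(∫ τ in 0..t₂, scaledRLKernel α t₂ τ * (τ ^ (1 - α) * f' τ))
        - ∫ τ in 0..t₁, scaledRLKernel α t₁ τ * (τ ^ (1 - α) * f' τ)|
      ≤ (Real.Gamma α)⁻¹ * (8 / α * M * (t₂ - t₁) ^ α) := by
        gcongr
        exact abs_integral_scaledRLKernel_mul_sub_le hα0 hα1.le hM0 ht₁ ht hmeas hbound
    _ = 8 / (α * Real.Gamma α) * M * (t₂ - t₁) ^ α := by field_simp
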